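/- Let A be an NBW over an alphabet Σ with classical congruence ∼. For every ω-word w ∈ Σ^ω: w ∉ L(A) if and only if there exist u ∈ Σ* and nonempty v ∈ Σ⁺ such that [u]_∼[v]_∼^ω is proper, w ∈ [u]_∼[v]_∼^ω, and [u]_∼[v]_∼^ω ∩ L(A) = ∅. Equivalently, Σ^ω ∖ L(A) is the union of the proper languages [u]_∼[v]_∼^ω that are disjoint from L(A). -/

import Mathlib

open scoped Classical

/-- A nondeterministic Büchi automaton over alphabet `α` with state type `Q`. -/
structure NBW (α : Type) (Q : Type) where
  I : Set Q
  δ : Q → α → Set Q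
  F : Set Q

namespace NBW

variable {α Q : Type}

/-- One-step successor set: `δ(S, a) = ⋃_{q ∈ S} δ(q, a)`. -/
def δStep (A : NBW α Q) (S : Set Q) (a : α) : Set Q := ⋃ q ∈ S, A.δ q a

/-- Extension of `δ` to finite words: `δ(S, ε) = S`, `δ(S, ua) = δ(δ(S, u), a)`. -/
def δSet (A : NBW α Q) (S : Set Q) (u : List α) : Set Q := u.foldl A.δStep S

/-- `A.Reach q u r` means `q →ᵘ r`: there is a run of `A` over `u` from `q` to `r`. -/
def Reach (A : NBW α Q) : Q → List α → Q → Prop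
  | q, [], r => q = r
  | q, a :: u, r => ∃ p ∈ A.δ q a, A.Reach p u r

/-- `A.FReach q u r` means `q ⇒ᵘ r`: there is a run of `A` over `u` from `q` to `r`
visiting some accepting state. -/
def FReach (A : NBW α Q) : Q → List α → Q → Prop
  | q, [], r => q = r ∧ q ∈ A.F
  | q, a :: u, r =>
      (q ∈ A.F ∧ ∃ p ∈ A.δ q a, A.Reach p u r) ∨ ∃ p ∈ A.δ q a, A.FReach p u r

/-- The classical congruence `∼`:  `u₁ ∼ u₂` iff for all states `q, r`,
`q →^{u₁} r ↔ q →^{u₂} r` and `q ⇒^{u₁} r ↔ q ⇒^{u₂} r`. -/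
def canoEq (A : NBW α Q) (u₁ u₂ : List α) : Prop :=
  ∀ q r : Q, (A.Reach q u₁ r ↔ A.Reach q u₂ r) ∧ (A.FReach q u₁ r ↔ A.FReach q u₂ r)

/-- The `∼`-equivalence class of `u`. -/
def canoClass (A : NBW α Q) (u : List α) : Set (List α) := {x | A.canoEq u x}

/-- The right congruence `∼ⁱ`: `u₁ ∼ⁱ u₂` iff `δ(I, u₁) = δ(I, u₂)`. -/
def iEq (A : NBW α Q) (u₁ u₂ : List α) : Prop := A.δSet A.I u₁ = A.δSet A.I u₂

/-- The `∼ⁱ`-equivalence class of `u`. -/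
def iClass (A : NBW α Q) (u : List α) : Set (List α) := {x | A.iEq u x}

/-- The relation `≈ᵤ`: `v₁ ≈ᵤ v₂` iff for all `q ∈ δ(I, u)` and all states `r`,
`q →^{v₁} r ↔ q →^{v₂} r` and `q ⇒^{v₁} r ↔ q ⇒^{v₂} r`. -/
def proEq (A : NBW α Q) (u v₁ v₂ : List α) : Prop :=
  ∀ q ∈ A.δSet A.I u, ∀ r : Q,
    (A.Reach q v₁ r ↔ A.Reach q v₂ r) ∧ (A.FReach q v₁ r ↔ A.FReach q v₂ r)

/-- The `≈ᵤ`-equivalence class of `v`. -/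
def proClass (A : NBW α Q) (u v : List α) : Set (List α) := {x | A.proEq u v x}

/-- Büchi acceptance of an ω-word `w : ℕ → α`. -/
def AcceptsOmega (A : NBW α Q) (w : ℕ → α) : Prop :=
  ∃ ρ : ℕ → Q, ρ 0 ∈ A.I ∧ (∀ i, ρ (i + 1) ∈ A.δ (ρ i) (w i)) ∧
    ∀ n, ∃ i, n ≤ i ∧ ρ i ∈ A.F

/-- The ω-language of `A`. -/
def L (A : NBW α Q) : Set (ℕ → α) := {w | A.AcceptsOmega w}

end NBW

/-- Elementwise concatenation of two languages of finite words. -/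
def Lang.concat {α : Type} (X Y : Set (List α)) : Set (List α) :=
  {z | ∃ x ∈ X, ∃ y ∈ Y, z = x ++ y}

/-- `OmegaLang U V` is the set of ω-words of the form `u₀ v₁ v₂ ⋯` with `u₀ ∈ U`
and each `vᵢ` a nonempty word in `V`: every finite prefix `u₀ v₁ ⋯ v_k` is a
prefix of `w`. -/
def OmegaLang {α : Type} (U V : Set (List α)) : Set (ℕ → α) :=
  {w | ∃ u₀ ∈ U, ∃ vs : ℕ → List α,
    (∀ i, vs i ≠ [] ∧ vs i ∈ V) ∧
    ∀ k : ℕ,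
      u₀ ++ ((List.range k).map vs).flatten =
        List.ofFn fun i : Fin (u₀ ++ ((List.range k).map vs).flatten).length => w i.1}

/-- The ω-language `[u]_∼ [v]_∼^ω` is proper if `[u][v] ⊆ [u]` and `[v][v] ⊆ [v]`. -/
def IsProper {α Q : Type} (A : NBW α Q) (u v : List α) : Prop :=
  Lang.concat (A.canoClass u) (A.canoClass v) ⊆ A.canoClass u ∧
  Lang.concat (A.canoClass v) (A.canoClass v) ⊆ A.canoClass v

/-! ### Auxiliary lemmas -/

open NBW

namespace NBW

variable {α Q : Type} {A : NBW α Q}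

theorem reach_nil {q r : Q} : A.Reach q [] r ↔ q = r := Iff.rfl
theorem reach_cons {a : α} {u : List α} {q r : Q} :
    A.Reach q (a :: u) r ↔ ∃ p ∈ A.δ q a, A.Reach p u r := Iff.rfl
theorem freach_nil {q r : Q} : A.FReach q [] r ↔ q = r ∧ q ∈ A.F := Iff.rfl
theorem freach_cons {a : α} {u : List α} {q r : Q} :
    A.FReach q (a :: u) r ↔
      (q ∈ A.F ∧ ∃ p ∈ A.δ q a, A.Reach p u r) ∨ ∃ p ∈ A.δ q a, A.FReach p u r := Iff.rfl

theorem reach_append {u v : List α} {q r : Q} :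
    A.Reach q (u ++ v) r ↔ ∃ p, A.Reach q u p ∧ A.Reach p v r := by
  induction u generalizing q with
  | nil => simp [reach_nil]
  | cons a u ih =>
    simp only [List.cons_append, reach_cons, ih]
    constructor
    · rintro ⟨p, hp, s, h1, h2⟩; exact ⟨s, ⟨p, hp, h1⟩, h2⟩
    · rintro ⟨s, ⟨p, hp, h1⟩, h2⟩; exact ⟨p, hp, s, h1, h2⟩

theorem freach_of_mem_F {u : List α} {q r : Q} (hq : q ∈ A.F) (h : A.Reach q u r) :
    A.FReach q u r := by
  cases u with
  | nil => exact ⟨h, hq⟩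
  | cons a u => exact Or.inl ⟨hq, h⟩

theorem freach_reach {u : List α} {q r : Q} (h : A.FReach q u r) : A.Reach q u r := by
  induction u generalizing q with
  | nil => exact h.1
  | cons a u ih =>
    rcases h with ⟨_, hp⟩ | ⟨p, hp, h⟩
    · exact hp
    · exact ⟨p, hp, ih h⟩

theorem freach_append {u v : List α} {q r : Q} :
    A.FReach q (u ++ v) r ↔
      ∃ p, (A.FReach q u p ∧ A.Reach p v r) ∨ (A.Reach q u p ∧ A.FReach p v r) := by
  induction u generalizing q with
  | nil =>
    simp only [List.nil_append, reach_nil, freach_nil]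
    constructor
    · intro h; exact ⟨q, Or.inr ⟨rfl, h⟩⟩
    · rintro ⟨p, ⟨⟨rfl, hF⟩, h⟩ | ⟨rfl, h⟩⟩
      · exact freach_of_mem_F hF h
      · exact h
  | cons a u ih =>
    simp only [List.cons_append, freach_cons, reach_cons, reach_append, ih]
    constructor
    · rintro (⟨hF, p, hp, s, h1, h2⟩ | ⟨p, hp, s, h⟩)
      · exact ⟨s, Or.inl ⟨Or.inl ⟨hF, p, hp, h1⟩, h2⟩⟩
      · rcases h with ⟨h1, h2⟩ | ⟨h1, h2⟩
        · exact ⟨s, Or.inl ⟨Or.inr ⟨p, hp, h1⟩, h2⟩⟩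
        · exact ⟨s, Or.inr ⟨⟨p, hp, h1⟩, h2⟩⟩
    · rintro ⟨s, (⟨(⟨hF, p, hp, h1⟩ | ⟨p, hp, h1⟩), h2⟩ | ⟨⟨p, hp, h1⟩, h2⟩)⟩
      · exact Or.inl ⟨hF, p, hp, s, h1, h2⟩
      · exact Or.inr ⟨p, hp, s, Or.inl ⟨h1, h2⟩⟩
      · exact Or.inr ⟨p, hp, s, Or.inr ⟨h1, h2⟩⟩

theorem canoEq_refl (u : List α) : A.canoEq u u := fun _ _ => ⟨Iff.rfl, Iff.rfl⟩
theorem canoEq_symm {u v : List α} (h : A.canoEq u v) : A.canoEq v u :=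
  fun q r => ⟨(h q r).1.symm, (h q r).2.symm⟩
theorem canoEq_trans {u v x : List α} (h : A.canoEq u v) (h' : A.canoEq v x) : A.canoEq u x :=
  fun q r => ⟨(h q r).1.trans (h' q r).1, (h q r).2.trans (h' q r).2⟩

theorem canoEq_append {u₁ u₂ v₁ v₂ : List α} (h : A.canoEq u₁ u₂) (h' : A.canoEq v₁ v₂) :
    A.canoEq (u₁ ++ v₁) (u₂ ++ v₂) := by
  intro q r
  constructor
  · rw [reach_append, reach_append]
    exact exists_congr fun p => and_congr ((h q p).1) ((h' p r).1)
  · rw [freach_append, freach_append]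
    exact exists_congr fun p => or_congr
      (and_congr (h q p).2 (h' p r).1) (and_congr (h q p).1 (h' p r).2)

theorem freach_of_end_mem_F {u : List α} {q r : Q} (h : A.Reach q u r) (hr : r ∈ A.F) :
    A.FReach q u r := by
  induction u generalizing q with
  | nil => exact ⟨h, h ▸ hr⟩
  | cons a u ih => rcases h with ⟨p, hp, h⟩; exact Or.inr ⟨p, hp, ih h⟩

theorem exists_run_of_reach {u : List α} {q r : Q} (h : A.Reach q u r) :
    ∃ ρ : ℕ → Q, ρ 0 = q ∧ ρ u.length = r ∧
      ∀ j, ∀ hj : j < u.length, ρ (j + 1) ∈ A.δ (ρ j) u[j] := by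
  induction u generalizing q with
  | nil => exact ⟨fun _ => q, rfl, h, by intro j hj; simp at hj⟩
  | cons a u ih =>
    rcases h with ⟨p, hp, h⟩
    obtain ⟨ρ', h0, hend, hstep⟩ := ih h
    refine ⟨fun j => if j = 0 then q else ρ' (j - 1), rfl, by simp [hend], ?_⟩
    intro j hj
    match j with
    | 0 => simpa [h0] using hp
    | j + 1 =>
      simpa using hstep j (by simpa using hj)

theorem exists_run_of_freach {u : List α} {q r : Q} (h : A.FReach q u r) :
    ∃ ρ : ℕ → Q, ρ 0 = q ∧ ρ u.length = r ∧
      (∀ j, ∀ hj : j < u.length, ρ (j + 1) ∈ A.δ (ρ j) u[j]) ∧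
      ∃ jF ≤ u.length, ρ jF ∈ A.F := by
  induction u generalizing q with
  | nil => exact ⟨fun _ => q, rfl, h.1, by intro j hj; simp at hj, 0, le_refl _, h.2⟩
  | cons a u ih =>
    rcases h with ⟨hF, hre⟩ | ⟨p, hp, h⟩
    · obtain ⟨ρ, h0, hend, hstep⟩ := exists_run_of_reach (show A.Reach q (a :: u) r from hre)
      exact ⟨ρ, h0, hend, hstep, 0, by omega, h0 ▸ hF⟩
    · obtain ⟨ρ', h0, hend, hstep, jF, hjF, hFmem⟩ := ih h
      refine ⟨fun j => if j = 0 then q else ρ' (j - 1), rfl, by simp [hend], ?_, jF + 1,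
        by simpa using hjF, by simpa using hFmem⟩
      intro j hj
      match j with
      | 0 => simpa [h0] using hp
      | j + 1 => simpa using hstep j (by simpa using hj)

theorem reach_of_run {ρ : ℕ → Q} {w' : ℕ → α}
    (hstep : ∀ i, ρ (i + 1) ∈ A.δ (ρ i) (w' i)) (x : List α) (off : ℕ)
    (hx : ∀ j, ∀ hj : j < x.length, x[j] = w' (off + j)) :
    A.Reach (ρ off) x (ρ (off + x.length)) := by
  induction x generalizing off with
  | nil => simp [reach_nil]
  | cons a x ih =>
    refine ⟨ρ (off + 1), ?_, ?_⟩
    · have := hx 0 (by simp)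
      simp only [List.getElem_cons_zero] at this
      rw [this]; exact hstep off
    · have := ih (off + 1) (fun j hj => by
        have := hx (j + 1) (by simpa using hj)
        simpa [Nat.add_assoc, Nat.add_comm 1 j] using this)
      have harith : off + 1 + x.length = off + (a :: x).length := by simp; omega
      rwa [harith] at this

theorem freach_of_run {ρ : ℕ → Q} {w' : ℕ → α}
    (hstep : ∀ i, ρ (i + 1) ∈ A.δ (ρ i) (w' i)) (x : List α) (off : ℕ)
    (hx : ∀ j, ∀ hj : j < x.length, x[j] = w' (off + j))
    (jF : ℕ) (hjF : jF ≤ x.length) (hF : ρ (off + jF) ∈ A.F) :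
    A.FReach (ρ off) x (ρ (off + x.length)) := by
  have hsplit : x = x.take jF ++ x.drop jF := (List.take_append_drop jF x).symm
  have hlt : (x.take jF).length = jF := by simp [List.length_take]; omega
  have h1 : A.Reach (ρ off) (x.take jF) (ρ (off + jF)) := by
    have := reach_of_run hstep (x.take jF) off (fun j hj => by
      rw [List.getElem_take]; exact hx j (by simp at hj; omega))
    rwa [hlt] at this
  have h2 : A.Reach (ρ (off + jF)) (x.drop jF) (ρ (off + x.length)) := by
    have := reach_of_run hstep (x.drop jF) (off + jF) (fun j hj => by
      rw [List.getElem_drop, hx (jF + j) (by simp at hj ⊢; omega), Nat.add_assoc])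
    have harith : off + jF + (x.drop jF).length = off + x.length := by
      simp [List.length_drop]; omega
    rwa [harith] at this
  nth_rewrite 1 [hsplit]
  exact freach_append.mpr ⟨ρ (off + jF), Or.inl ⟨freach_of_end_mem_F h1 hF, h2⟩⟩

end NBW
theorem exists_strictMono_subseq {P : ℕ → Prop} (h : ∀ n, ∃ k, n ≤ k ∧ P k) :
    ∃ e : ℕ → ℕ, StrictMono e ∧ ∀ n, P (e n) := by
  choose f hf1 hf2 using h
  let e : ℕ → ℕ := fun n => Nat.rec (motive := fun _ => ℕ) (f 0) (fun _ prev => f (prev + 1)) n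
  have he : ∀ n, e (n + 1) = f (e n + 1) := fun n => rfl
  have hmono : ∀ n, e n < e (n + 1) := fun n =>
    lt_of_lt_of_le (Nat.lt_succ_self _) (by rw [he]; exact hf1 _)
  refine ⟨e, strictMono_nat_of_lt_succ hmono, fun n => ?_⟩
  cases n with
  | zero => exact hf2 0
  | succ n => rw [he]; exact hf2 _

theorem infinite_unbounded {S : Set ℕ} (h : S.Infinite) : ∀ n, ∃ k, n ≤ k ∧ k ∈ S := by
  intro n
  obtain ⟨k, hk⟩ := (h.diff (Set.finite_Iio n)).nonempty
  exact ⟨k, by simpa using hk.2, hk.1⟩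

theorem exists_infinite_fiber' {C : Type*} [Finite C] (f : ℕ → C) :
    ∃ c, {n | f n = c}.Infinite := by
  obtain ⟨c, h⟩ := Finite.exists_infinite_fiber f
  exact ⟨c, (Set.infinite_coe_iff.mp h).mono fun n hn => hn⟩

theorem ramsey_two {C : Type} [Finite C] (f : ℕ → ℕ → C) :
    ∃ (g : ℕ → ℕ) (c : C), StrictMono g ∧ ∀ i j, i < j → f (g i) (g j) = c := by
  have claim : ∀ S : Set ℕ, S.Infinite → ∀ x, ∃ c : C,
      {y | y ∈ S ∧ x < y ∧ f x y = c}.Infinite := by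
    intro S hS x
    by_contra hcon
    push_neg at hcon
    have hT : {y | y ∈ S ∧ x < y}.Infinite :=
      (hS.diff (Set.finite_Iic x)).mono
        (fun y hy => ⟨hy.1, lt_of_not_ge (fun h => hy.2 h)⟩)
    have hsub : {y | y ∈ S ∧ x < y} ⊆ ⋃ c : C, {y | y ∈ S ∧ x < y ∧ f x y = c} :=
      fun y hy => Set.mem_iUnion.mpr ⟨f x y, hy.1, hy.2, rfl⟩
    exact hT ((Set.finite_iUnion hcon).subset hsub)
  have step : ∀ S : Set ℕ, ∃ x c, ∃ S' : Set ℕ,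
      S.Infinite → x ∈ S ∧ S'.Infinite ∧ S' ⊆ S ∧ ∀ y ∈ S', x < y ∧ f x y = c := by
    intro S
    by_cases hS : S.Infinite
    · obtain ⟨x, hx⟩ := hS.nonempty
      obtain ⟨c, hc⟩ := claim S hS x
      exact ⟨x, c, {y | y ∈ S ∧ x < y ∧ f x y = c},
        fun _ => ⟨hx, hc, fun y hy => hy.1, fun y hy => ⟨hy.2.1, hy.2.2⟩⟩⟩
    · exact ⟨0, f 0 0, S, fun h => absurd h hS⟩
  choose X Cc SS hstep using step
  let Sn : ℕ → Set ℕ := fun n =>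
    Nat.rec (motive := fun _ => Set ℕ) Set.univ (fun _ S => SS S) n
  have hSn : ∀ n, (Sn n).Infinite := by
    intro n
    induction n with
    | zero => exact Set.infinite_univ
    | succ n ih => exact (hstep (Sn n) ih).2.1
  set x : ℕ → ℕ := fun n => X (Sn n) with hxdef
  set c : ℕ → C := fun n => Cc (Sn n) with hcdef
  have hx_mem : ∀ n, x n ∈ Sn n := fun n => (hstep _ (hSn n)).1
  have hsub : ∀ n, Sn (n + 1) ⊆ Sn n := fun n => (hstep _ (hSn n)).2.2.1
  have hprop : ∀ n, ∀ y ∈ Sn (n + 1), x n < y ∧ f (x n) y = c n :=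
    fun n => (hstep _ (hSn n)).2.2.2
  have hchain : ∀ n k, Sn (n + k) ⊆ Sn n := by
    intro n k
    induction k with
    | zero => exact fun y hy => hy
    | succ k ih => exact fun y hy => ih (hsub (n + k) hy)
  have hmem_of_lt : ∀ n m, n < m → x m ∈ Sn (n + 1) := by
    intro n m h
    have hm : n + 1 + (m - (n + 1)) = m := by omega
    exact hchain (n + 1) (m - (n + 1)) (by rw [hm]; exact hx_mem m)
  have hxmono : StrictMono x :=
    strictMono_nat_of_lt_succ (fun n => (hprop n _ (hmem_of_lt n (n + 1) (Nat.lt_succ_self n))).1)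
  have hcolor : ∀ n m, n < m → f (x n) (x m) = c n :=
    fun n m h => (hprop n _ (hmem_of_lt n m h)).2
  obtain ⟨d, hd⟩ := exists_infinite_fiber' c
  obtain ⟨e, he, hed⟩ := exists_strictMono_subseq (infinite_unbounded hd)
  exact ⟨x ∘ e, d, hxmono.comp he, fun i j hij => by
    simp only [Function.comp]
    rw [hcolor _ _ (he hij)]
    exact hed i⟩

theorem exists_block {p : ℕ → ℕ} (hp : StrictMono p) {i : ℕ} (h : p 0 ≤ i) :
    ∃ k, p k ≤ i ∧ i < p (k + 1) := by
  refine ⟨Nat.findGreatest (fun k => p k ≤ i) i,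
    Nat.findGreatest_spec (P := fun k => p k ≤ i) (m := 0) (Nat.zero_le i) h, ?_⟩
  by_contra hcon
  push_neg at hcon
  exact Nat.findGreatest_is_greatest (Nat.lt_succ_self _)
    (le_trans hp.le_apply hcon) hcon

theorem findGreatest_block_eq {p : ℕ → ℕ} (hp : StrictMono p) {i k : ℕ}
    (h1 : p k ≤ i) (h2 : i < p (k + 1)) :
    Nat.findGreatest (fun k => p k ≤ i) i = k := by
  rw [Nat.findGreatest_eq_iff]
  refine ⟨le_trans hp.le_apply h1, fun _ => h1, fun n hn _ hpn => ?_⟩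
  have h3 : p (k + 1) ≤ p n := hp.monotone hn
  omega

theorem omega_decomp {α : Type} {U V : Set (List α)} {w : ℕ → α}
    (hw : w ∈ OmegaLang U V) :
    ∃ u₀ ∈ U, ∃ vs : ℕ → List α, (∀ i, vs i ≠ [] ∧ vs i ∈ V) ∧
      ∃ p : ℕ → ℕ, p 0 = u₀.length ∧ (∀ k, p (k + 1) = p k + (vs k).length) ∧
        StrictMono p ∧ (∀ j, ∀ hj : j < u₀.length, u₀[j] = w j) ∧
        (∀ k j, ∀ hj : j < (vs k).length, (vs k)[j] = w (p k + j)) := by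
  obtain ⟨u₀, hu₀, vs, hvs, hpre⟩ := hw
  have hent : ∀ k j, ∀ hj : j < (u₀ ++ ((List.range k).map vs).flatten).length,
      (u₀ ++ ((List.range k).map vs).flatten)[j] = w j := by
    intro k j hj
    rw [List.getElem_of_eq (hpre k) hj, List.getElem_ofFn]
  refine ⟨u₀, hu₀, vs, hvs, fun k => (u₀ ++ ((List.range k).map vs).flatten).length,
    by simp, fun k => by simp [List.range_succ, Nat.add_assoc], ?_, ?_, ?_⟩
  · apply strictMono_nat_of_lt_succ
    intro n
    have := List.length_pos_iff.mpr (hvs n).1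
    simp only [List.range_succ, List.map_append, List.flatten_append, List.length_append]
    simp
    omega
  · intro j hj
    have h := hent 0 j (by simpa using hj)
    rwa [List.getElem_append_left hj] at h
  · intro k j hj
    have hX : u₀ ++ ((List.range (k + 1)).map vs).flatten
        = (u₀ ++ ((List.range k).map vs).flatten) ++ vs k := by simp [List.range_succ]
    have hjlt : (u₀ ++ ((List.range k).map vs).flatten).length + j
        < (u₀ ++ ((List.range (k + 1)).map vs).flatten).length := by
      simp only [hX, List.length_append]; omega
    have h := hent (k + 1) ((u₀ ++ ((List.range k).map vs).flatten).length + j) hjlt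
    rw [List.getElem_of_eq hX, List.getElem_append_right (Nat.le_add_right _ _)] at h
    simpa using h

open NBW in
theorem accepts_of_lasso {α Q : Type} {A : NBW α Q} {u v : List α} {w : ℕ → α}
    (hw : w ∈ OmegaLang (A.canoClass u) (A.canoClass v))
    {q₀ q : Q} (hq₀ : q₀ ∈ A.I) (hru : A.Reach q₀ u q) (hrv : A.FReach q v q) :
    A.AcceptsOmega w := by
  obtain ⟨u₀, hu₀, vs, hvs, p, hp0, hpsucc, hpmono, hw0, hwblk⟩ := omega_decomp hw
  have hp0le : ∀ k, p 0 ≤ p k := fun k => hpmono.monotone (Nat.zero_le k)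
  have hru0 : A.Reach q₀ u₀ q := (hu₀ q₀ q).1.mp hru
  have hrvk : ∀ k, A.FReach q (vs k) q := fun k => (((hvs k).2) q q).2.mp hrv
  obtain ⟨ρ₀, hρ00, hρ0end, hρ0step⟩ := exists_run_of_reach hru0
  choose σ hσ0 hσend hσstep jF hjF hjFF using fun k => exists_run_of_freach (hrvk k)
  set blk : ℕ → ℕ := fun i => Nat.findGreatest (fun k => p k ≤ i) i with hblkdef
  set ρ : ℕ → Q := fun i => if i < p 0 then ρ₀ i else σ (blk i) (i - p (blk i)) with hρdef
  have hblk_eq : ∀ i k, p k ≤ i → i < p (k + 1) → blk i = k :=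
    fun i k h1 h2 => findGreatest_block_eq hpmono h1 h2
  have hρval : ∀ k j, j < (vs k).length → ρ (p k + j) = σ k j := by
    intro k j hj
    have h1 : ¬ (p k + j < p 0) := by have := hp0le k; omega
    rw [hρdef]
    simp only [h1, if_false]
    rw [hblk_eq (p k + j) k (by omega) (by rw [hpsucc]; omega)]
    congr 1
    omega
  have hρbound : ∀ k, ρ (p k) = q := by
    intro k
    have h1 : ¬ (p k < p 0) := by have := hp0le k; omega
    rw [hρdef]
    simp only [h1, if_false]
    rw [hblk_eq (p k) k (le_refl _) (hpmono (Nat.lt_succ_self k))]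
    simpa using hσ0 k
  have hρ0val : ∀ i, i < p 0 → ρ i = ρ₀ i := fun i h => by rw [hρdef]; simp [h]
  refine ⟨ρ, ?_, ?_, ?_⟩
  · by_cases h : 0 < p 0
    · rw [hρ0val 0 h, hρ00]; exact hq₀
    · have hp00 : p 0 = 0 := by omega
      have hu₀nil : u₀ = [] := List.length_eq_zero_iff.mp (by rw [← hp0, hp00])
      have hqq : q₀ = q := by rw [hu₀nil] at hru0; exact hru0
      have h0 := hρbound 0
      rw [hp00] at h0
      rw [h0, ← hqq]; exact hq₀
  · intro i
    by_cases hcase : i + 1 ≤ p 0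
    · have hi : i < p 0 := by omega
      have hρi : ρ i = ρ₀ i := hρ0val i hi
      have hρi1 : ρ (i + 1) = ρ₀ (i + 1) := by
        by_cases h2 : i + 1 < p 0
        · exact hρ0val _ h2
        · have heq : i + 1 = p 0 := by omega
          rw [heq, hρbound 0, hp0]
          exact hρ0end.symm
      rw [hρi, hρi1]
      have hstep := hρ0step i (by rw [← hp0]; exact hi)
      rwa [hw0 i (by rw [← hp0]; exact hi)] at hstep
    · push_neg at hcase
      have hi : p 0 ≤ i := by omega
      obtain ⟨k, hk1, hk2⟩ := exists_block hpmono hi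
      have hij : i = p k + (i - p k) := by omega
      have hjlt : i - p k < (vs k).length := by have := hpsucc k; omega
      have hρi : ρ i = σ k (i - p k) := by
        have h := hρval k (i - p k) hjlt
        rwa [← hij] at h
      have hρi1 : ρ (i + 1) = σ k (i - p k + 1) := by
        by_cases h2 : i - p k + 1 < (vs k).length
        · have h := hρval k (i - p k + 1) h2
          rwa [show p k + (i - p k + 1) = i + 1 by omega] at h
        · have hj1 : i - p k + 1 = (vs k).length := by omega
          have heq : i + 1 = p (k + 1) := by rw [hpsucc]; omega
          rw [heq, hρbound (k + 1), ← hσend k, hj1]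
      rw [hρi, hρi1]
      have hstep := hσstep k (i - p k) hjlt
      rwa [hwblk k (i - p k) hjlt, ← hij] at hstep
  · intro n
    refine ⟨p n + jF n, ?_, ?_⟩
    · have := hpmono.le_apply (x := n); omega
    · by_cases h : jF n < (vs n).length
      · rw [hρval n (jF n) h]; exact hjFF n
      · have hj : jF n = (vs n).length := by have := hjF n; omega
        have heq : p n + jF n = p (n + 1) := by rw [hpsucc, hj]
        rw [heq, hρbound (n + 1)]
        have := hjFF n
        rwa [hj, hσend n] at this

open NBW in
theorem lasso_of_accepts {α Q : Type} [Fintype Q] {A : NBW α Q} {u v : List α}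
    (hprop : IsProper A u v) {w' : ℕ → α}
    (hw : w' ∈ OmegaLang (A.canoClass u) (A.canoClass v))
    (hacc : A.AcceptsOmega w') :
    ∃ q₀ ∈ A.I, ∃ q, A.Reach q₀ u q ∧ A.FReach q v q := by
  obtain ⟨u₀, hu₀, vs, hvs, p, hp0, hpsucc, hpmono, hw0, hwblk⟩ := omega_decomp hw
  obtain ⟨ρ, hρI, hρstep, hρF⟩ := hacc
  set qs : ℕ → Q := fun k => ρ (p k) with hqsdef
  have hreach_u₀ : A.Reach (ρ 0) u₀ (qs 0) := by
    have h := reach_of_run hρstep u₀ 0 (fun j hj => by simpa using hw0 j hj)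
    simpa [hqsdef, hp0] using h
  have hRb : ∀ k, A.Reach (qs k) (vs k) (qs (k + 1)) := by
    intro k
    have h := reach_of_run hρstep (vs k) (p k) (fun j hj => hwblk k j hj)
    rwa [← hpsucc k] at h
  have hFb : ∀ n, ∃ k, n ≤ k ∧ A.FReach (qs k) (vs k) (qs (k + 1)) := by
    intro n
    obtain ⟨i, hi1, hi2⟩ := hρF (p n)
    have hi0 : p 0 ≤ i := le_trans (hpmono.monotone (Nat.zero_le n)) hi1
    obtain ⟨k, hk1, hk2⟩ := exists_block hpmono hi0
    have hlen := hpsucc k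
    refine ⟨k, ?_, ?_⟩
    · by_contra hcon
      push_neg at hcon
      have h3 : p (k + 1) ≤ p n := hpmono.monotone hcon
      omega
    · have h := freach_of_run hρstep (vs k) (p k) (fun j hj => hwblk k j hj) (i - p k)
        (by omega) (by rw [show p k + (i - p k) = i by omega]; exact hi2)
      rwa [← hpsucc k] at h
  obtain ⟨e, he, hed⟩ := exists_strictMono_subseq hFb
  obtain ⟨qq, hqq⟩ := exists_infinite_fiber' (fun n => qs (e n))
  obtain ⟨a, _, ha⟩ := infinite_unbounded hqq 0
  obtain ⟨b, hb1, hb2⟩ := infinite_unbounded hqq (a + 1)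
  have hij : e a < e b := he (by omega)
  have hqi : qs (e a) = qq := ha
  have hqj : qs (e b) = qq := hb2
  have hreach_blocks : ∀ d a', A.Reach (qs a')
      (((List.range' a' d).map vs).flatten) (qs (a' + d)) := by
    intro d
    induction d with
    | zero => intro a'; simp [reach_nil]
    | succ d ih =>
      intro a'
      rw [List.range'_succ]
      simp only [List.map_cons, List.flatten_cons]
      refine reach_append.mpr ⟨qs (a' + 1), hRb a', ?_⟩
      have h := ih (a' + 1)
      rwa [show a' + 1 + d = a' + (d + 1) by omega] at h
  have hXu : ∀ k, A.canoEq u (u₀ ++ ((List.range k).map vs).flatten) := by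
    intro k
    induction k with
    | zero => simpa [NBW.canoClass] using hu₀
    | succ k ih =>
      have h : u₀ ++ ((List.range (k + 1)).map vs).flatten
          = (u₀ ++ ((List.range k).map vs).flatten) ++ vs k := by simp [List.range_succ]
      rw [h]
      exact hprop.1 ⟨_, ih, _, (hvs k).2, rfl⟩
  have hYv : ∀ d a', A.canoEq v (((List.range' a' (d + 1)).map vs).flatten) := by
    intro d
    induction d with
    | zero => intro a'; simpa [List.range'_succ, NBW.canoClass] using (hvs a').2
    | succ d ih =>
      intro a'
      rw [List.range'_succ]
      simp only [List.map_cons, List.flatten_cons]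
      exact hprop.2 ⟨_, (hvs a').2, _, ih (a' + 1), rfl⟩
  have hXreach : A.Reach (ρ 0) (u₀ ++ ((List.range (e a)).map vs).flatten) (qs (e a)) := by
    refine reach_append.mpr ⟨qs 0, hreach_u₀, ?_⟩
    have h := hreach_blocks (e a) 0
    rw [show (0 : ℕ) + e a = e a by omega] at h
    rwa [List.range_eq_range']
  have hur : A.Reach (ρ 0) u (qs (e a)) := ((hXu (e a)) (ρ 0) (qs (e a))).1.mpr hXreach
  have hd : e b = e a + 1 + (e b - (e a + 1)) := by omega
  have hYfr : A.FReach (qs (e a))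
      (vs (e a) ++ ((List.range' (e a + 1) (e b - (e a + 1))).map vs).flatten) (qs (e b)) := by
    refine freach_append.mpr ⟨qs (e a + 1), Or.inl ⟨hed a, ?_⟩⟩
    have h := hreach_blocks (e b - (e a + 1)) (e a + 1)
    rwa [← hd] at h
  have hYcls : A.canoEq v
      (vs (e a) ++ ((List.range' (e a + 1) (e b - (e a + 1))).map vs).flatten) := by
    rcases Nat.eq_or_lt_of_le (show e a + 1 ≤ e b from hij) with heq | hlt
    · rw [show e b - (e a + 1) = 0 by omega]
      simpa [NBW.canoClass] using (hvs (e a)).2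
    · rw [show e b - (e a + 1) = (e b - (e a + 1) - 1) + 1 by omega]
      exact hprop.2 ⟨_, (hvs (e a)).2, _, hYv (e b - (e a + 1) - 1) (e a + 1), rfl⟩
  have hfr : A.FReach (qs (e a)) v (qs (e a)) := by
    rw [hqj, ← hqi] at hYfr
    exact ((hYcls (qs (e a)) (qs (e a))).2).mpr hYfr
  exact ⟨ρ 0, hρI, qs (e a), hur, hfr⟩

/-- The segment `w[i..j)` of an ω-word. -/
def seg {α : Type} (w : ℕ → α) (i j : ℕ) : List α :=
  List.ofFn (fun t : Fin (j - i) => w (i + t.1))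

theorem seg_length {α : Type} (w : ℕ → α) (i j : ℕ) : (seg w i j).length = j - i :=
  List.length_ofFn

theorem seg_getElem {α : Type} (w : ℕ → α) (i j t : ℕ) (ht : t < (seg w i j).length) :
    (seg w i j)[t] = w (i + t) := by
  simp only [seg, List.getElem_ofFn]

theorem seg_append {α : Type} (w : ℕ → α) {i j k : ℕ} (h1 : i ≤ j) (h2 : j ≤ k) :
    seg w i j ++ seg w j k = seg w i k := by
  apply List.ext_getElem
  · simp [seg_length]; omega
  · intro n hn1 hn2
    rw [seg_getElem]
    by_cases h : n < (seg w i j).length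
    · rw [List.getElem_append_left h, seg_getElem]
    · rw [List.getElem_append_right (le_of_not_gt h), seg_getElem]
      congr 1
      rw [seg_length] at h
      simp only [seg_length]
      omega

theorem eq_ofFn_self {α : Type} {x : List α} {w : ℕ → α}
    (h : ∀ j, ∀ hj : j < x.length, x[j] = w j) :
    x = List.ofFn (fun i : Fin x.length => w i.1) :=
  List.ext_getElem (by simp) (fun n h1 h2 => by rw [List.getElem_ofFn]; exact h n h1)


/-- `w ∉ L(A)` iff `w` lies in some proper language `[u]_∼[v]_∼^ω`
disjoint from `L(A)`. -/
theorem complement_characterization {α Q : Type} [Fintype Q] (A : NBW α Q) (w : ℕ → α) :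
    w ∉ A.L ↔
      ∃ u v : List α, v ≠ [] ∧ IsProper A u v ∧
        w ∈ OmegaLang (A.canoClass u) (A.canoClass v) ∧
        OmegaLang (A.canoClass u) (A.canoClass v) ∩ A.L = ∅ := by
  constructor
  · intro hwL
    -- color pairs by the `∼`-data of the segment of `w` between them
    set col : ℕ → ℕ → (Q → Q → Prop) × (Q → Q → Prop) := fun i j =>
      (fun a b => A.Reach a (seg w i j) b, fun a b => A.FReach a (seg w i j) b) with hcoldef
    have cano_of_col : ∀ {i j i' j'}, col i j = col i' j' →
        A.canoEq (seg w i j) (seg w i' j') := by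
      intro i j i' j' h a b
      constructor
      · exact iff_of_eq (congrFun (congrFun (congrArg Prod.fst h) a) b)
      · exact iff_of_eq (congrFun (congrFun (congrArg Prod.snd h) a) b)
    obtain ⟨tT, htT⟩ := exists_infinite_fiber' (fun n => col 0 n)
    obtain ⟨t, ht_mono, ht_col⟩ := exists_strictMono_subseq (infinite_unbounded htT)
    obtain ⟨g, d, hg_mono, hg_col⟩ := ramsey_two (fun i j => col (t i) (t j))
    set m : ℕ → ℕ := fun k => t (g k) with hmdef
    have hm_mono : StrictMono m := ht_mono.comp hg_mono
    have hm_col : ∀ i j, i < j → col (m i) (m j) = d := fun i j h => hg_col i j h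
    have hm_pre : ∀ i, col 0 (m i) = col 0 (m 0) := fun i => by
      show col 0 (t (g i)) = col 0 (t (g 0))
      rw [ht_col (g i), ht_col (g 0)]
    set u := seg w 0 (m 0) with hudef
    set v := seg w (m 0) (m 1) with hvdef
    have hseg : ∀ i j, i < j → A.canoEq v (seg w (m i) (m j)) := fun i j h =>
      cano_of_col ((hm_col 0 1 (by omega)).trans (hm_col i j h).symm)
    have hpre : ∀ i, A.canoEq u (seg w 0 (m i)) := fun i =>
      cano_of_col (hm_pre i).symm
    have hv_ne : v ≠ [] := by
      apply List.ne_nil_of_length_pos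
      rw [hvdef, seg_length]
      have := hm_mono (show 0 < 1 by omega)
      omega
    have hprop : IsProper A u v := by
      constructor
      · rintro z ⟨x, hx, y, hy, rfl⟩
        have h1 : A.canoEq (u ++ v) (x ++ y) := NBW.canoEq_append hx hy
        have h2 : u ++ v = seg w 0 (m 1) :=
          seg_append w (Nat.zero_le _) (hm_mono (Nat.lt_succ_self 0)).le
        exact NBW.canoEq_trans (hpre 1) (h2 ▸ h1)
      · rintro z ⟨x, hx, y, hy, rfl⟩
        have hy' : A.canoEq (seg w (m 1) (m 2)) y :=
          NBW.canoEq_trans (NBW.canoEq_symm (hseg 1 2 (by omega))) hy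
        have h1 : A.canoEq (v ++ seg w (m 1) (m 2)) (x ++ y) := NBW.canoEq_append hx hy'
        have h2 : v ++ seg w (m 1) (m 2) = seg w (m 0) (m 2) :=
          seg_append w (hm_mono (by omega)).le (hm_mono (by omega)).le
        exact NBW.canoEq_trans (hseg 0 2 (by omega)) (h2 ▸ h1)
    have hmem : w ∈ OmegaLang (A.canoClass u) (A.canoClass v) := by
      refine ⟨u, NBW.canoEq_refl u, fun k => seg w (m k) (m (k + 1)),
        fun k => ⟨?_, hseg k (k + 1) (Nat.lt_succ_self k)⟩, ?_⟩
      · apply List.ne_nil_of_length_pos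
        rw [seg_length]
        have := hm_mono (show k < k + 1 by omega)
        omega
      · intro k
        have hX : u ++ ((List.range k).map (fun k => seg w (m k) (m (k + 1)))).flatten
            = seg w 0 (m k) := by
          induction k with
          | zero => simp [hudef]
          | succ k ih =>
            rw [List.range_succ]
            simp only [List.map_append, List.flatten_append, List.map_cons,
              List.flatten_cons, List.map_nil, List.flatten_nil, List.append_nil,
              ← List.append_assoc]
            rw [ih, seg_append w (Nat.zero_le _) (hm_mono (Nat.lt_succ_self k)).le]
        rw [hX]
        exact eq_ofFn_self (fun j hj => by
          rw [seg_getElem]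
          exact congrArg w (Nat.zero_add j))
    refine ⟨u, v, hv_ne, hprop, hmem, ?_⟩
    rw [Set.eq_empty_iff_forall_notMem]
    rintro w' ⟨hw1, hw2⟩
    obtain ⟨q₀, hq₀, q, hru, hrv⟩ := lasso_of_accepts hprop hw1 hw2
    exact hwL (accepts_of_lasso hmem hq₀ hru hrv)
  · rintro ⟨u, v, _, _, hmem, hdisj⟩ hwL
    exact Set.eq_empty_iff_forall_notMem.mp hdisj w ⟨hmem, hwL⟩
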